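/- arXiv:1602.01749 — 3 statements merged into one kernel-verified Lean document; each statement's English description precedes it below -/
import Mathlib

section
/- Let G be a finite subgroup of PGL₂(ℚ) such that 𝒪 = {O₁, …, O_k} is finite and nonempty; its orbits consist of algebraic numbers. For each i choose α_i ∈ O_i and let p_i ∈ ℤ[x] be the minimal polynomial of α_i over ℚ. Let K be an algebraic number field with its places v normalized so that ∏_v |α|_v = 1 for every α ∈ K^× and ∏_{v archimedean} |α|_v = |N_{K/ℚ}(α)|, and set n_v = 0 if v is non-Archimedean, n_v = 1 if v is real, and n_v = 2 if v is complex. Then there exists B_max > 0 such that for every B with 0 < B < B_max there exists D > 0 with the following property: for every place v of K and every α ∈ K such that for all σ ∈ G the value σ(α) lies in K, is nonzero, and is not a root of any p_i, one has Σ_{σ∈G} ( log⁺|σ(α)|_v − (1/2)·log|σ(α)|_v − B·Σ_{i=1}^k log|p_i(σ(α))|_v ) ≥ n_v·D, where log⁺ t = log max(t, 1). -/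
/- For a nonzero `f ∈ ℤ[X]`, the Mahler measure `M(f) = |a_n| ∏ max(|α_i|,1)`. -/
open Polynomial

noncomputable def mahlerMeasure (f : ℤ[X]) : ℝ :=
  |(f.leadingCoeff : ℝ)| *
    (((f.map (Int.castRingHom ℂ)).roots).map (fun z => max ‖z‖ 1)).prod

/-- The primitive minimal polynomial over `ℤ` of an algebraic number. -/
noncomputable def intMinpoly (α : ℂ) : ℤ[X] :=
  (IsLocalization.integerNormalization (nonZeroDivisors ℤ) (minpoly ℚ α)).primPart

/-- The absolute logarithmic Weil height `h(α) = (1/n) log M(f)`. -/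
noncomputable def height (α : ℂ) : ℝ :=
  Real.log (mahlerMeasure (intMinpoly α)) / (minpoly ℚ α).natDegree

/-- `PGL₂(ℚ)`. -/
abbrev PGL2 : Type := GL (Fin 2) ℚ ⧸ Subgroup.center (GL (Fin 2) ℚ)

/-- The Möbius transformation of `ℂ ∪ {∞}` attached to a rational matrix `(a b; c d)`,
`z ↦ (az+b)/(cz+d)`. -/
noncomputable def mobius (m : Matrix (Fin 2) (Fin 2) ℚ) (x : OnePoint ℂ) : OnePoint ℂ :=
  Option.elim x
    (if (m 1 0 : ℂ) = 0 then OnePoint.infty else (((m 0 0 : ℚ) : ℂ) / ((m 1 0 : ℚ) : ℂ) : ℂ))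
    (fun z => if ((m 1 0 : ℚ) : ℂ) * z + ((m 1 1 : ℚ) : ℂ) = 0 then OnePoint.infty
      else ((((m 0 0 : ℚ) : ℂ) * z + ((m 0 1 : ℚ) : ℂ)) / (((m 1 0 : ℚ) : ℂ) * z + ((m 1 1 : ℚ) : ℂ)) : ℂ))

/-- The action of `σ ∈ PGL₂(ℚ)` on `ℂ ∪ {∞}` (via a representative matrix; the result
does not depend on this choice). -/
noncomputable def pglApply (σ : PGL2) (x : OnePoint ℂ) : OnePoint ℂ :=
  mobius (σ.out : Matrix (Fin 2) (Fin 2) ℚ) x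

/-- The Weil height on `ℂ ∪ {∞}`, with `h(∞) = 0`. -/
noncomputable def heightOP (x : OnePoint ℂ) : ℝ := Option.elim x 0 height

/-- The `G`-orbit height `h_G(x) = ∑_{σ ∈ G} h(σ x)`. -/
noncomputable def hOrbit (G : Subgroup PGL2) (x : OnePoint ℂ) : ℝ :=
  ∑ᶠ σ ∈ (G : Set PGL2), heightOP (pglApply σ x)

/-- The orbit of `x ∈ ℂ ∪ {∞}` under `G`. -/
def pglOrbit (G : Subgroup PGL2) (x : OnePoint ℂ) : Set (OnePoint ℂ) :=
  {y | ∃ σ ∈ G, pglApply σ x = y}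

/-- The set `𝒪` of orbits of `G` on `ℂ ∪ {∞}` all of whose elements are `0` or lie on
the unit circle. -/
def goodOrbits (G : Subgroup PGL2) : Set (Set (OnePoint ℂ)) :=
  {O | (∃ x : OnePoint ℂ, O = pglOrbit G x) ∧
      ∀ y ∈ O, y = ((0 : ℂ) : OnePoint ℂ) ∨ ∃ z : ℂ, y = (z : OnePoint ℂ) ∧ ‖z‖ = 1}

open IsDedekindDomain NumberField

/-- The places of a number field `K`: finite places (indexed by the height-one spectrum of
the ring of integers) and infinite places. -/
def Place (K : Type*) [Field K] [NumberField K] : Type _ :=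
  HeightOneSpectrum (𝓞 K) ⊕ InfinitePlace K

/-- The normalized `v`-adic absolute value attached to a finite place, with
`|π|_v = N(v)^{-1}` for a uniformizer `π`; with this normalization the product of `|α|_v`
over all places is `1` for `α ≠ 0`. -/
noncomputable def finitePlaceAbs {K : Type*} [Field K] [NumberField K]
    (v : HeightOneSpectrum (𝓞 K)) (x : K) : ℝ :=
  letI := Classical.decEq K
  if hx : x = 0 then 0
  else (Ideal.absNorm v.asIdeal : ℝ) ^
    (Multiplicative.toAdd (WithZero.unzero ((Valuation.ne_zero_iff (v.valuation K)).mpr hx)))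

/-- The normalized absolute value `|·|_v` at a place `v`; at an infinite place `w` it is
`|ι(·)|^{n_v}` for the corresponding embedding `ι`, so that the product of `|α|_v` over the
archimedean places is `|N_{K/ℚ}(α)|`. -/
noncomputable def placeAbs {K : Type*} [Field K] [NumberField K] (v : Place K) (x : K) : ℝ :=
  Sum.elim (fun w => finitePlaceAbs w x) (fun w => (w x) ^ w.mult) v

/-- The local degree datum `n_v`: `0` at a non-Archimedean place, `1` at a real place and
`2` at a complex place. -/
noncomputable def placeN {K : Type*} [Field K] [NumberField K] (v : Place K) : ℕ :=
  Sum.elim (fun _ => 0) (fun w => w.mult) v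

/-- `σ(x)` for `σ ∈ PGL₂(ℚ)` and `x` in a field `K` of characteristic zero (via a
representative matrix of `σ`). -/
noncomputable def pglApplyField {K : Type*} [Field K] [Algebra ℚ K] (σ : PGL2) (x : K) : K :=
  (algebraMap ℚ K ((σ.out : Matrix (Fin 2) (Fin 2) ℚ) 0 0) * x +
    algebraMap ℚ K ((σ.out : Matrix (Fin 2) (Fin 2) ℚ) 0 1)) /
  (algebraMap ℚ K ((σ.out : Matrix (Fin 2) (Fin 2) ℚ) 1 0) * x +
    algebraMap ℚ K ((σ.out : Matrix (Fin 2) (Fin 2) ℚ) 1 1))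

/-- `σ(x)` lies in `K` (rather than being `∞`), i.e. the denominator `cx + d` does not
vanish. -/
noncomputable def pglDefinedField {K : Type*} [Field K] [Algebra ℚ K] (σ : PGL2) (x : K) :
    Prop :=
  algebraMap ℚ K ((σ.out : Matrix (Fin 2) (Fin 2) ℚ) 1 0) * x +
    algebraMap ℚ K ((σ.out : Matrix (Fin 2) (Fin 2) ℚ) 1 1) ≠ 0

/-!
Let `S(z) = ∑_σ |log |σz||` and `L(z) = ∑_σ ∑_i log |pᵢ(σz)|`. As `log⁺ t - ½ log t = ½ |log t|`,
for the complex absolute value the sum equals `½ S - B L`, and at an infinite place it is `n_v`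
times this, evaluated at the image of `x` under the embedding. At a finite place the ultrametric
inequality gives `log |pᵢ(y)|_v ≤ deg pᵢ · log⁺ |y|_v`, so each summand is nonnegative once
`B ∑ deg pᵢ ≤ ½`. Over `ℂ`, `L ≤ C + N S`, which `½ S` absorbs when `S` is large and `B` small.
When `S` is small, the orbit of `z` is close to the unit circle; by compactness `z` is close to a
point whose orbit lies on the unit circle, i.e. is one of the `Oⱼ`. That orbit contains `αⱼ`, so
some `pⱼ(σz)` is close to `0` and `L ≤ -1`.
-/

open Filter Topology

lemma log_max_one_sub_half_log {t : ℝ} (ht : 0 < t) :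
    Real.log (max t 1) - 1 / 2 * Real.log t = 1 / 2 * |Real.log t| := by
  rcases le_total 1 t with h | h
  · rw [max_eq_left h, abs_of_nonneg (Real.log_nonneg h)]; ring
  · rw [max_eq_right h, Real.log_one, abs_of_nonpos (Real.log_nonpos ht.le h)]; ring

lemma log_max_one_le_abs_log (t : ℝ) : Real.log (max t 1) ≤ |Real.log t| := by
  rcases le_total 1 t with h | h
  · rw [max_eq_left h]; exact le_abs_self _
  · rw [max_eq_right h, Real.log_one]; exact abs_nonneg _

lemma max_pow_one {t : ℝ} (ht : 0 ≤ t) (m : ℕ) : max (t ^ m) 1 = max t 1 ^ m := by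
  rcases le_total t 1 with h | h
  · rw [max_eq_right h, one_pow, max_eq_right (pow_le_one₀ ht h)]
  · rw [max_eq_left h, max_eq_left (one_le_pow₀ h)]

lemma pow_le_max_one_pow {t : ℝ} (ht : 0 ≤ t) {j d : ℕ} (hjd : j ≤ d) :
    t ^ j ≤ max t 1 ^ d :=
  (pow_le_pow_left₀ ht (le_max_left t 1) j).trans (pow_le_pow_right₀ (le_max_right t 1) hjd)

noncomputable def coeffBound (p : ℤ[X]) : ℝ :=
  max (∑ j ∈ Finset.range (p.natDegree + 1), |(p.coeff j : ℝ)|) 1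

lemma one_le_coeffBound (p : ℤ[X]) : 1 ≤ coeffBound p := le_max_right _ _

lemma norm_aeval_le (p : ℤ[X]) (y : ℂ) :
    ‖aeval y p‖ ≤ coeffBound p * max ‖y‖ 1 ^ p.natDegree := by
  rw [aeval_eq_sum_range]
  calc ‖∑ j ∈ Finset.range (p.natDegree + 1), p.coeff j • y ^ j‖
      ≤ ∑ j ∈ Finset.range (p.natDegree + 1), |(p.coeff j : ℝ)| * max ‖y‖ 1 ^ p.natDegree := by
        refine norm_sum_le_of_le _ fun j hj => ?_
        have hj : j ≤ p.natDegree := Nat.lt_succ_iff.mp (Finset.mem_range.mp hj)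
        rw [zsmul_eq_mul, norm_mul, norm_pow, Complex.norm_intCast]
        gcongr
        exact pow_le_max_one_pow (norm_nonneg y) hj
    _ ≤ coeffBound p * max ‖y‖ 1 ^ p.natDegree := by
        rw [← Finset.sum_mul]
        gcongr
        exact le_max_left _ _

lemma log_norm_aeval_le (p : ℤ[X]) (y : ℂ) :
    Real.log ‖aeval y p‖ ≤ Real.log (coeffBound p) + p.natDegree * Real.log (max ‖y‖ 1) := by
  have hC := one_le_coeffBound p
  have hy : (1 : ℝ) ≤ max ‖y‖ 1 := le_max_right _ _
  rcases eq_or_ne (aeval y p) 0 with h | h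
  · rw [h, norm_zero, Real.log_zero]
    exact add_nonneg (Real.log_nonneg hC) (mul_nonneg (Nat.cast_nonneg _) (Real.log_nonneg hy))
  · calc Real.log ‖aeval y p‖ ≤ Real.log (coeffBound p * max ‖y‖ 1 ^ p.natDegree) :=
          Real.log_le_log (norm_pos_iff.mpr h) (norm_aeval_le p y)
      _ = _ := by rw [Real.log_mul (by positivity) (by positivity), Real.log_pow]

lemma sum_sum_log_norm_aeval_le {ι β : Type*} [Fintype ι] (p : ι → ℤ[X]) (s : Finset β)
    (y : β → ℂ) :
    ∑ b ∈ s, ∑ i, Real.log ‖aeval (y b) (p i)‖ ≤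
      s.card * ∑ i, Real.log (coeffBound (p i)) +
        (∑ i, ((p i).natDegree : ℝ)) * ∑ b ∈ s, |Real.log ‖y b‖| := by
  calc ∑ b ∈ s, ∑ i, Real.log ‖aeval (y b) (p i)‖
      ≤ ∑ b ∈ s, ∑ i, (Real.log (coeffBound (p i)) + (p i).natDegree * |Real.log ‖y b‖|) := by
        gcongr with b _ i
        exact (log_norm_aeval_le _ _).trans (by gcongr; exact log_max_one_le_abs_log _)
    _ = _ := by
        simp only [Finset.sum_add_distrib, ← Finset.sum_mul, Finset.sum_const, nsmul_eq_mul,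
          Finset.mul_sum]

lemma IsNonarchimedean.apply_aeval_le {R : Type*} [CommRing R] [Nontrivial R]
    {v : AbsoluteValue R ℝ} (hv : IsNonarchimedean v) (p : ℤ[X]) (y : R) :
    v (aeval y p) ≤ max (v y) 1 ^ p.natDegree := by
  rw [aeval_eq_sum_range]
  obtain ⟨j, hj, hle⟩ := hv.finset_image_add_of_nonempty (fun j => p.coeff j • y ^ j)
    Finset.nonempty_range_add_one
  refine hle.trans ?_
  rw [zsmul_eq_mul, v.map_mul, v.map_pow]
  have hj : j ≤ p.natDegree := Nat.lt_succ_iff.mp (Finset.mem_range.mp hj)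
  calc v (p.coeff j) * v y ^ j ≤ 1 * max (v y) 1 ^ p.natDegree := by
        gcongr
        exacts [hv.apply_intCast_le_one, pow_le_max_one_pow (v.nonneg y) hj]
    _ = _ := one_mul _

lemma finitePlaceAbs_eq_adicAbv {K : Type*} [Field K] [NumberField K]
    (v : HeightOneSpectrum (𝓞 K)) (x : K) :
    finitePlaceAbs v x = NumberField.HeightOneSpectrum.adicAbv K v x := by
  rw [NumberField.HeightOneSpectrum.adicAbv_def, finitePlaceAbs]
  by_cases hx : x = 0
  · simp [hx]
  · rw [dif_neg hx, WithZeroMulInt.toNNReal_neg_apply _ ((Valuation.ne_zero_iff _).mpr hx)]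
    push_cast
    rfl

lemma map_aeval_int {R S : Type*} [CommRing R] [CommRing S] (φ : R →+* S) (y : R) (q : ℤ[X]) :
    φ (aeval y q) = aeval (φ y) q :=
  (aeval_algHom_apply φ.toIntAlgHom y q).symm

section LocalTerm

variable {ι : Type*} [Fintype ι] (p : ι → ℤ[X]) (B : ℝ)

noncomputable def localTerm {R : Type*} [CommRing R] (f : R → ℝ) (y : R) : ℝ :=
  Real.log (max (f y) 1) - 1 / 2 * Real.log (f y) - B * ∑ i, Real.log (f (aeval y (p i)))

lemma localTerm_eq_of_pos {R : Type*} [CommRing R] {f : R → ℝ} {y : R} (hy : 0 < f y) :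
    localTerm p B f y =
      1 / 2 * |Real.log (f y)| - B * ∑ i, Real.log (f (aeval y (p i))) := by
  rw [localTerm, log_max_one_sub_half_log hy]

lemma localTerm_pow {R : Type*} [CommRing R] {f : R → ℝ} (hf : ∀ y, 0 ≤ f y) (m : ℕ) (y : R) :
    localTerm p B (fun y => f y ^ m) y = m * localTerm p B f y := by
  simp only [localTerm, max_pow_one (hf _), Real.log_pow, ← Finset.mul_sum]
  ring

lemma localTerm_comp {R S : Type*} [CommRing R] [CommRing S] (φ : R →+* S) (f : S → ℝ) (y : R) :
    localTerm p B (fun y => f (φ y)) y = localTerm p B f (φ y) := by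
  simp only [localTerm, map_aeval_int]

lemma localTerm_nonneg_of_isNonarchimedean {R : Type*} [CommRing R] [Nontrivial R]
    {v : AbsoluteValue R ℝ} (hv : IsNonarchimedean v) {y : R} (hy : y ≠ 0) (hB : 0 ≤ B)
    (hBp : B * ∑ i, ((p i).natDegree : ℝ) ≤ 1 / 2) : 0 ≤ localTerm p B v y := by
  have hlog (q : ℤ[X]) : Real.log (v (aeval y q)) ≤ q.natDegree * Real.log (max (v y) 1) := by
    rcases eq_or_ne (v (aeval y q)) 0 with h | h
    · rw [h, Real.log_zero]
      exact mul_nonneg (Nat.cast_nonneg _) (Real.log_nonneg (le_max_right _ _))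
    · rw [← Real.log_pow]
      exact Real.log_le_log ((v.nonneg _).lt_of_ne' h) (hv.apply_aeval_le q y)
  have hsum : ∑ i, Real.log (v (aeval y (p i))) ≤
      (∑ i, ((p i).natDegree : ℝ)) * Real.log (max (v y) 1) := by
    rw [Finset.sum_mul]
    exact Finset.sum_le_sum fun i _ => hlog (p i)
  have hlog_max := log_max_one_le_abs_log (v y)
  have hlog_nonneg := Real.log_nonneg (le_max_right (v y) 1)
  rw [localTerm_eq_of_pos p B (v.pos hy)]
  linarith [mul_le_mul_of_nonneg_left hsum hB, mul_le_mul_of_nonneg_right hBp hlog_nonneg]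

end LocalTerm

section Mobius

variable {K L : Type*} [Field K] [Algebra ℚ K] [Field L] [Algebra ℚ L]

noncomputable def pglNum (σ : PGL2) (x : K) : K :=
  algebraMap ℚ K ((σ.out : Matrix (Fin 2) (Fin 2) ℚ) 0 0) * x +
    algebraMap ℚ K ((σ.out : Matrix (Fin 2) (Fin 2) ℚ) 0 1)

noncomputable def pglDen (σ : PGL2) (x : K) : K :=
  algebraMap ℚ K ((σ.out : Matrix (Fin 2) (Fin 2) ℚ) 1 0) * x +
    algebraMap ℚ K ((σ.out : Matrix (Fin 2) (Fin 2) ℚ) 1 1)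

lemma pglApplyField_eq_div (σ : PGL2) (x : K) :
    pglApplyField σ x = pglNum σ x / pglDen σ x := rfl

lemma pglDefinedField_iff (σ : PGL2) (x : K) : pglDefinedField σ x ↔ pglDen σ x ≠ 0 := Iff.rfl

lemma pglNum_ne_zero_of_pglDen_eq_zero (σ : PGL2) {x : K} (h : pglDen σ x = 0) :
    pglNum σ x ≠ 0 := by
  intro hnum
  set M : Matrix (Fin 2) (Fin 2) ℚ := (σ.out : Matrix (Fin 2) (Fin 2) ℚ)
  have hdet : M.det ≠ 0 := ((Matrix.isUnit_iff_isUnit_det M).mp σ.out.isUnit).ne_zero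
  apply hdet
  apply (algebraMap ℚ K).injective
  rw [Matrix.det_fin_two, map_zero]
  calc algebraMap ℚ K (M 0 0 * M 1 1 - M 0 1 * M 1 0)
      = algebraMap ℚ K (M 0 0) * pglDen σ x - pglNum σ x * algebraMap ℚ K (M 1 0) := by
        simp only [pglNum, pglDen, map_sub, map_mul, M]; ring
    _ = 0 := by rw [h, hnum]; ring

lemma pglApplyField_one (x : K) : pglApplyField (1 : PGL2) x = x := by
  have hcenter : (1 : PGL2).out ∈ Subgroup.center (GL (Fin 2) ℚ) := by
    rw [← QuotientGroup.eq_one_iff]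
    exact Quotient.out_eq _
  -- the chosen representative of `1` is some nonzero scalar matrix, not necessarily `1`
  obtain ⟨a, ha⟩ := Matrix.GeneralLinearGroup.mem_center_iff_val_mem_range_scalar.mp hcenter
  have : CharZero K := charZero_of_injective_algebraMap (algebraMap ℚ K).injective
  have ha0 : (a : K) ≠ 0 := by
    rw [Rat.cast_ne_zero]
    rintro rfl
    exact (1 : PGL2).out.ne_zero (by rw [← ha, map_zero])
  simp [pglApplyField, ← ha, mul_div_cancel_left₀ x ha0]

lemma map_pglNum (φ : K →+* L) (σ : PGL2) (x : K) : φ (pglNum σ x) = pglNum σ (φ x) := by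
  simp only [pglNum, map_add, map_mul, eq_ratCast, map_ratCast]

lemma map_pglDen (φ : K →+* L) (σ : PGL2) (x : K) : φ (pglDen σ x) = pglDen σ (φ x) := by
  simp only [pglDen, map_add, map_mul, eq_ratCast, map_ratCast]

lemma map_pglApplyField (φ : K →+* L) (σ : PGL2) (x : K) :
    φ (pglApplyField σ x) = pglApplyField σ (φ x) := by
  rw [pglApplyField_eq_div, pglApplyField_eq_div, map_div₀, map_pglNum, map_pglDen]

lemma pglDefinedField_map_iff (φ : K →+* L) (σ : PGL2) (x : K) :
    pglDefinedField σ (φ x) ↔ pglDefinedField σ x := by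
  rw [pglDefinedField_iff, pglDefinedField_iff, ← map_pglDen, _root_.map_ne_zero]

end Mobius

def OrbitAvoids (G : Subgroup PGL2) {ι : Type*} (p : ι → ℤ[X]) {K : Type*} [Field K]
    [Algebra ℚ K] (x : K) : Prop :=
  ∀ σ ∈ G, pglDefinedField σ x ∧ pglApplyField σ x ≠ 0 ∧ ∀ i, aeval (pglApplyField σ x) (p i) ≠ 0

lemma OrbitAvoids.map {G : Subgroup PGL2} {ι : Type*} {p : ι → ℤ[X]} {K L : Type*} [Field K]
    [Algebra ℚ K] [Field L] [Algebra ℚ L] {x : K} (hx : OrbitAvoids G p x) (φ : K →+* L) :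
    OrbitAvoids G p (φ x) := by
  intro σ hσ
  obtain ⟨hdef, hne, hroot⟩ := hx σ hσ
  refine ⟨(pglDefinedField_map_iff φ σ x).mpr hdef, ?_, fun i => ?_⟩
  · rwa [← map_pglApplyField, _root_.map_ne_zero]
  · rw [← map_pglApplyField, ← map_aeval_int, _root_.map_ne_zero]
    exact hroot i

lemma pglApply_coe (σ : PGL2) {w : ℂ} (h : pglDefinedField σ w) :
    pglApply σ w = ((pglApplyField σ w : ℂ) : OnePoint ℂ) := by
  simp only [pglDefinedField, eq_ratCast (algebraMap ℚ ℂ)] at h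
  simp only [pglApply, mobius, pglApplyField, eq_ratCast (algebraMap ℚ ℂ)]
  exact if_neg h

lemma continuous_pglNum (σ : PGL2) : Continuous (pglNum σ : ℂ → ℂ) := by
  unfold pglNum; fun_prop

lemma continuous_pglDen (σ : PGL2) : Continuous (pglDen σ : ℂ → ℂ) := by
  unfold pglDen; fun_prop

lemma continuousAt_pglApplyField (σ : PGL2) {w : ℂ} (hw : pglDefinedField σ w) :
    ContinuousAt (pglApplyField σ) w :=
  (continuous_pglNum σ).continuousAt.div (continuous_pglDen σ).continuousAt hw

lemma pglDefinedField_of_tendsto {β : Type*} {l : Filter β} [l.NeBot] (σ : PGL2) {u : β → ℂ}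
    {w : ℂ} (hu : Tendsto u l (𝓝 w)) (hdef : ∀ b, pglDefinedField σ (u b)) {r : ℝ}
    (hr : Tendsto (fun b => ‖pglApplyField σ (u b)‖) l (𝓝 r)) : pglDefinedField σ w := by
  refine (pglDefinedField_iff σ w).mpr fun hden => ?_
  have hnum : Tendsto (fun b => ‖pglNum σ (u b)‖) l (𝓝 0) := by
    have hprod := hr.mul ((continuous_pglDen σ).tendsto w |>.comp hu).norm
    rw [hden, norm_zero, mul_zero] at hprod
    refine hprod.congr fun b => ?_
    rw [Function.comp_apply, ← norm_mul, pglApplyField_eq_div,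
      div_mul_cancel₀ _ ((pglDefinedField_iff σ _).mp (hdef b))]
  have hnum0 := tendsto_nhds_unique (((continuous_pglNum σ).tendsto w).comp hu).norm hnum
  exact pglNum_ne_zero_of_pglDen_eq_zero σ hden (norm_eq_zero.mp hnum0)

section Orbits

variable {G : Subgroup PGL2} {ι : Type*} {O : ι → Set (OnePoint ℂ)} {α : ι → ℂ}

lemma exists_pglApplyField_eq_of_norm_eq_one (hO : goodOrbits G = Set.range O)
    (hαmem : ∀ i, (α i : OnePoint ℂ) ∈ O i) {w : ℂ}
    (hw : ∀ σ ∈ G, pglDefinedField σ w ∧ ‖pglApplyField σ w‖ = 1) :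
    ∃ j, ∃ σ ∈ G, pglApplyField σ w = α j := by
  have hgood : pglOrbit G w ∈ goodOrbits G := by
    refine ⟨⟨w, rfl⟩, ?_⟩
    rintro y ⟨σ, hσ, rfl⟩
    exact Or.inr ⟨pglApplyField σ w, pglApply_coe σ (hw σ hσ).1, (hw σ hσ).2⟩
  rw [hO] at hgood
  obtain ⟨j, hj⟩ := hgood
  obtain ⟨σ, hσ, hσα⟩ : (α j : OnePoint ℂ) ∈ pglOrbit G w := hj ▸ hαmem j
  rw [pglApply_coe σ (hw σ hσ).1, OnePoint.coe_eq_coe] at hσα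
  exact ⟨j, σ, hσ, hσα⟩

lemma exists_subseq_tendsto_of_norm_tendsto_one {z : ℕ → ℂ}
    (hdef : ∀ n, ∀ σ ∈ G, pglDefinedField σ (z n))
    (hnorm : ∀ σ ∈ G, Tendsto (fun n => ‖pglApplyField σ (z n)‖) atTop (𝓝 1)) :
    ∃ w : ℂ, (∀ σ ∈ G, pglDefinedField σ w ∧ ‖pglApplyField σ w‖ = 1) ∧
      ∃ φ : ℕ → ℕ, StrictMono φ ∧ Tendsto (z ∘ φ) atTop (𝓝 w) := by
  have hz : Tendsto (fun n => ‖z n‖) atTop (𝓝 1) := by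
    simpa only [pglApplyField_one] using hnorm 1 G.one_mem
  have hbdd : ∀ᶠ n in atTop, z n ∈ Metric.closedBall (0 : ℂ) 2 :=
    (hz.eventually (gt_mem_nhds one_lt_two)).mono fun n hn => mem_closedBall_zero_iff.mpr hn.le
  obtain ⟨w, -, φ, hφ, hzw⟩ :=
    tendsto_subseq_of_frequently_bounded Metric.isBounded_closedBall hbdd.frequently
  refine ⟨w, fun σ hσ => ?_, φ, hφ, hzw⟩
  have hσφ := (hnorm σ hσ).comp hφ.tendsto_atTop
  have hdefw := pglDefinedField_of_tendsto σ hzw (fun n => hdef _ σ hσ) hσφ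
  exact ⟨hdefw,
    tendsto_nhds_unique ((continuousAt_pglApplyField σ hdefw).tendsto.comp hzw).norm hσφ⟩

variable [Fintype ι] {p : ι → ℤ[X]}

lemma exists_subseq_tendsto_prod_aeval_zero (hG : (G : Set PGL2).Finite)
    (hO : goodOrbits G = Set.range O) (hαmem : ∀ i, (α i : OnePoint ℂ) ∈ O i)
    (hp : ∀ i, aeval (α i) (p i) = 0) {z : ℕ → ℂ}
    (hdef : ∀ n, ∀ σ ∈ G, pglDefinedField σ (z n))
    (hnorm : ∀ σ ∈ G, Tendsto (fun n => ‖pglApplyField σ (z n)‖) atTop (𝓝 1)) :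
    ∃ φ : ℕ → ℕ, StrictMono φ ∧ Tendsto
      (fun m => ∏ σ ∈ hG.toFinset, ∏ i, aeval (pglApplyField σ (z (φ m))) (p i)) atTop (𝓝 0) := by
  obtain ⟨w, hw, φ, hφ, hzw⟩ := exists_subseq_tendsto_of_norm_tendsto_one hdef hnorm
  obtain ⟨j, τ, hτ, hτw⟩ := exists_pglApplyField_eq_of_norm_eq_one hO hαmem hw
  have hvanish : ∏ σ ∈ hG.toFinset, ∏ i, aeval (pglApplyField σ w) (p i) = 0 :=
    Finset.prod_eq_zero (hG.mem_toFinset.mpr hτ)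
      (Finset.prod_eq_zero (Finset.mem_univ j) (by rw [hτw, hp]))
  refine ⟨φ, hφ, hvanish ▸ tendsto_finsetProd _ fun σ hσ => tendsto_finsetProd _ fun i _ => ?_⟩
  have hσw := (continuousAt_pglApplyField σ (hw σ (hG.mem_toFinset.mp hσ)).1).tendsto.comp hzw
  exact ((Polynomial.continuous_aeval (p i)).tendsto _).comp hσw

lemma log_norm_prod_aeval {s : Finset PGL2} {z : ℂ} (hz : OrbitAvoids G p z) (hs : ∀ σ ∈ s, σ ∈ G) :
    Real.log ‖∏ σ ∈ s, ∏ i, aeval (pglApplyField σ z) (p i)‖ =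
      ∑ σ ∈ s, ∑ i, Real.log ‖aeval (pglApplyField σ z) (p i)‖ := by
  rw [norm_prod, Real.log_prod fun σ hσ => ?_]
  · refine Finset.sum_congr rfl fun σ hσ => ?_
    rw [norm_prod, Real.log_prod fun i _ => norm_ne_zero_iff.mpr ((hz σ (hs σ hσ)).2.2 i)]
  · rw [norm_prod]
    exact Finset.prod_ne_zero_iff.mpr fun i _ => norm_ne_zero_iff.mpr ((hz σ (hs σ hσ)).2.2 i)

lemma exists_sum_log_norm_aeval_le_neg_one (hG : (G : Set PGL2).Finite)
    (hO : goodOrbits G = Set.range O) (hαmem : ∀ i, (α i : OnePoint ℂ) ∈ O i)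
    (hp : ∀ i, aeval (α i) (p i) = 0) :
    ∃ δ > 0, ∀ z : ℂ, OrbitAvoids G p z →
      ∑ σ ∈ hG.toFinset, |Real.log ‖pglApplyField σ z‖| ≤ δ →
      ∑ σ ∈ hG.toFinset, ∑ i, Real.log ‖aeval (pglApplyField σ z) (p i)‖ ≤ -1 := by
  -- Otherwise there are `zₙ` with `S(zₙ) → 0` and `L(zₙ) > -1`, but along a subsequence the
  -- product of all `pᵢ(σ zₙ)`, whose logarithm is `L(zₙ)`, tends to `0`.
  by_contra! h
  choose z hz hS hL using fun n : ℕ => h (1 / (n + 1)) Nat.one_div_pos_of_nat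
  have hnorm : ∀ σ ∈ G, Tendsto (fun n => ‖pglApplyField σ (z n)‖) atTop (𝓝 1) := by
    intro σ hσ
    have hlog : Tendsto (fun n => Real.log ‖pglApplyField σ (z n)‖) atTop (𝓝 0) :=
      squeeze_zero_norm (fun n => (Finset.single_le_sum (fun τ _ => abs_nonneg _)
        (hG.mem_toFinset.mpr hσ)).trans (hS n)) tendsto_one_div_add_atTop_nhds_zero_nat
    rw [← Real.exp_zero]
    exact hlog.rexp.congr fun n => Real.exp_log (norm_pos_iff.mpr (hz n σ hσ).2.1)
  obtain ⟨φ, -, hφ⟩ := exists_subseq_tendsto_prod_aeval_zero hG hO hαmem hp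
    (fun n σ hσ => (hz n σ hσ).1) hnorm
  have hsmall := hφ.norm.eventually (gt_mem_nhds (norm_zero (E := ℂ) ▸ Real.exp_pos (-1)))
  obtain ⟨m, hm⟩ := hsmall.exists
  have hmem : ∀ σ ∈ hG.toFinset, σ ∈ G := fun σ hσ => hG.mem_toFinset.mp hσ
  have hpos : 0 < ‖∏ σ ∈ hG.toFinset, ∏ i, aeval (pglApplyField σ (z (φ m))) (p i)‖ :=
    norm_pos_iff.mpr <| Finset.prod_ne_zero_iff.mpr fun σ hσ =>
      Finset.prod_ne_zero_iff.mpr fun i _ => (hz _ σ (hmem σ hσ)).2.2 i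
  have hlt := Real.log_lt_log hpos hm
  rw [Real.log_exp, log_norm_prod_aeval (hz _) hmem] at hlt
  exact (hL _).not_gt hlt

lemma exists_archimedean_bound (hG : (G : Set PGL2).Finite)
    (hO : goodOrbits G = Set.range O) (hαmem : ∀ i, (α i : OnePoint ℂ) ∈ O i)
    (hp : ∀ i, aeval (α i) (p i) = 0) :
    ∃ Bmax > 0, ∀ B, 0 < B → B < Bmax → ∃ D > 0, ∀ z : ℂ, OrbitAvoids G p z →
      D ≤ ∑ σ ∈ hG.toFinset, localTerm p B (‖·‖) (pglApplyField σ z) := by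
  obtain ⟨δ, hδ, hsmall⟩ := exists_sum_log_norm_aeval_le_neg_one hG hO hαmem hp
  set C : ℝ := hG.toFinset.card * ∑ i, Real.log (coeffBound (p i))
  set N : ℝ := ∑ i, ((p i).natDegree : ℝ)
  have hC : 0 ≤ C := mul_nonneg (Nat.cast_nonneg _)
    (Finset.sum_nonneg fun i _ => Real.log_nonneg (one_le_coeffBound _))
  have hN : 0 ≤ N := Finset.sum_nonneg fun i _ => Nat.cast_nonneg _
  refine ⟨min (1 / (4 * (N + 1))) (δ / (4 * (C + 1))), by positivity, fun B hB hBlt => ?_⟩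
  have hBN : B * (4 * (N + 1)) < 1 :=
    (lt_div_iff₀ (by positivity)).mp (hBlt.trans_le (min_le_left _ _))
  have hBC : B * (4 * (C + 1)) < δ :=
    (lt_div_iff₀ (by positivity)).mp (hBlt.trans_le (min_le_right _ _))
  refine ⟨min (δ / 4 - B * C) B, lt_min (by linarith) hB, fun z hz => ?_⟩
  set S := ∑ σ ∈ hG.toFinset, |Real.log ‖pglApplyField σ z‖|
  set L := ∑ σ ∈ hG.toFinset, ∑ i, Real.log ‖aeval (pglApplyField σ z) (p i)‖
  have hsum : ∑ σ ∈ hG.toFinset, localTerm p B (‖·‖) (pglApplyField σ z) = 1 / 2 * S - B * L := by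
    rw [Finset.mul_sum, Finset.mul_sum, ← Finset.sum_sub_distrib]
    exact Finset.sum_congr rfl fun σ hσ =>
      localTerm_eq_of_pos p B (norm_pos_iff.mpr (hz σ (hG.mem_toFinset.mp hσ)).2.1)
  have hS : 0 ≤ S := Finset.sum_nonneg fun _ _ => abs_nonneg _
  rw [hsum]
  -- small `S`: `L ≤ -1` gives `B`; large `S`: `B N ≤ 1/4` leaves `S / 4 - B C ≥ δ / 4 - B C`
  rcases le_total S δ with hSδ | hδS
  · have hL : L ≤ -1 := hsmall z hz hSδ
    nlinarith [min_le_right (δ / 4 - B * C) B]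
  · have hL : L ≤ C + N * S := sum_sum_log_norm_aeval_le p hG.toFinset _
    nlinarith [min_le_left (δ / 4 - B * C) B]

end Orbits

lemma aeval_intMinpoly_self {α : ℂ} (h : IsAlgebraic ℚ α) : aeval α (intMinpoly α) = 0 :=
  aeval_primPart_eq_zero
    (IsFractionRing.integerNormalization_eq_zero_iff.not.mpr (minpoly.ne_zero h.isIntegral))
    (IsLocalization.integerNormalization_aeval_eq_zero _ _ (minpoly.aeval ℚ α))

section Places

variable {K : Type*} [Field K] [NumberField K]

lemma placeAbs_inl (v : HeightOneSpectrum (𝓞 K)) :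
    placeAbs (Sum.inl v : Place K) = NumberField.HeightOneSpectrum.adicAbv K v :=
  funext (finitePlaceAbs_eq_adicAbv v)

lemma placeAbs_inr (w : InfinitePlace K) :
    placeAbs (Sum.inr w : Place K) = fun x => ‖w.embedding x‖ ^ w.mult :=
  funext fun x => by rw [InfinitePlace.norm_embedding_eq]; rfl

end Places

theorem lemma_local_general (G : Subgroup PGL2) (hGfin : (G : Set PGL2).Finite)
    (k : ℕ) (O : Fin k → Set (OnePoint ℂ)) (hO : goodOrbits G = Set.range O)
    (α : Fin k → ℂ) (hαmem : ∀ i, (α i : OnePoint ℂ) ∈ O i)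
    (hαalg : ∀ i, IsAlgebraic ℚ (α i))
    (K : Type*) [Field K] [NumberField K] :
    ∃ Bmax : ℝ, 0 < Bmax ∧ ∀ B : ℝ, 0 < B → B < Bmax →
      ∃ D : ℝ, 0 < D ∧
        ∀ (v : Place K) (x : K),
          (∀ σ ∈ G, pglDefinedField σ x ∧ pglApplyField σ x ≠ 0 ∧
            ∀ i : Fin k, Polynomial.aeval (pglApplyField σ x) (intMinpoly (α i)) ≠ 0) →
          ∑ᶠ σ ∈ (G : Set PGL2),
              (Real.log (max (placeAbs v (pglApplyField σ x)) 1)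
                - (1 / 2) * Real.log (placeAbs v (pglApplyField σ x))
                - B * ∑ i : Fin k,
                    Real.log (placeAbs v
                      (Polynomial.aeval (pglApplyField σ x) (intMinpoly (α i)))))
            ≥ (placeN v : ℝ) * D := by
  set p : Fin k → ℤ[X] := fun i => intMinpoly (α i)
  obtain ⟨B₁, hB₁, harch⟩ :=
    exists_archimedean_bound hGfin hO hαmem (p := p) fun i => aeval_intMinpoly_self (hαalg i)
  set N : ℝ := ∑ i, ((p i).natDegree : ℝ)
  have hN : 0 ≤ N := Finset.sum_nonneg fun i _ => Nat.cast_nonneg _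
  refine ⟨min B₁ (1 / (2 * (N + 1))), lt_min hB₁ (by positivity), fun B hB hBlt => ?_⟩
  obtain ⟨D, hD, hDz⟩ := harch B hB (hBlt.trans_le (min_le_left _ _))
  have hBN : B * N ≤ 1 / 2 := by
    have := (lt_div_iff₀ (by positivity)).mp (hBlt.trans_le (min_le_right _ _))
    nlinarith
  refine ⟨D, hD, fun v x (hx : OrbitAvoids G p x) => ?_⟩
  rw [← hGfin.coe_toFinset, finsum_mem_coe_finset, ge_iff_le]
  change _ ≤ ∑ σ ∈ hGfin.toFinset, localTerm p B (placeAbs v) (pglApplyField σ x)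
  rcases v with v | w
  · rw [placeAbs_inl, show placeN (Sum.inl v : Place K) = 0 from rfl, Nat.cast_zero, zero_mul]
    exact Finset.sum_nonneg fun σ hσ => localTerm_nonneg_of_isNonarchimedean p B
      (NumberField.HeightOneSpectrum.isNonarchimedean_adicAbv K v)
      (hx σ (hGfin.mem_toFinset.mp hσ)).2.1 hB.le hBN
  · simp only [placeAbs_inr, localTerm_pow p B (fun _ => norm_nonneg _), localTerm_comp,
      map_pglApplyField, ← Finset.mul_sum]
    exact mul_le_mul_of_nonneg_left (hDz _ (hx.map w.embedding)) (Nat.cast_nonneg _)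

/-- **Lemma 2.** Let `G ≤ PGL₂(ℚ)` be finite with `𝒪 = {O₁, …, O_k}` finite and nonempty,
`α i ∈ O i` algebraic with primitive minimal polynomials `p i ∈ ℤ[X]`, and let `K` be a
number field.  There is `B_max > 0` such that for all `0 < B < B_max` there is `D > 0`
such that for every place `v` of `K` and every `x ∈ K` all of whose `G`-images lie in `K`,
are nonzero and are no roots of any `p i`, one has
`∑_{σ ∈ G} (log⁺|σx|_v - ½ log|σx|_v - B ∑ᵢ log|pᵢ(σx)|_v) ≥ n_v · D`. -/
theorem lemma_local (G : Subgroup PGL2) (hGfin : (G : Set PGL2).Finite)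
    (k : ℕ) (hk : 0 < k) (O : Fin k → Set (OnePoint ℂ)) (hO : goodOrbits G = Set.range O)
    (α : Fin k → ℂ) (hαmem : ∀ i, (α i : OnePoint ℂ) ∈ O i)
    (hαalg : ∀ i, IsAlgebraic ℚ (α i))
    (K : Type*) [Field K] [NumberField K] :
    ∃ Bmax : ℝ, 0 < Bmax ∧ ∀ B : ℝ, 0 < B → B < Bmax →
      ∃ D : ℝ, 0 < D ∧
        ∀ (v : Place K) (x : K),
          (∀ σ ∈ G, pglDefinedField σ x ∧ pglApplyField σ x ≠ 0 ∧
            ∀ i : Fin k, Polynomial.aeval (pglApplyField σ x) (intMinpoly (α i)) ≠ 0) →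
          ∑ᶠ σ ∈ (G : Set PGL2),
              (Real.log (max (placeAbs v (pglApplyField σ x)) 1)
                - (1 / 2) * Real.log (placeAbs v (pglApplyField σ x))
                - B * ∑ i : Fin k,
                    Real.log (placeAbs v
                      (Polynomial.aeval (pglApplyField σ x) (intMinpoly (α i)))))
            ≥ (placeN v : ℝ) * D :=
  lemma_local_general G hGfin k O hO α hαmem hαalg K
end

section
/- Let G be a finite subgroup of PGL₂(ℚ). Then the set 𝒪 is infinite if and only if there exist a, b ∈ ℚ with a² ≠ b² such that G is contained in the subgroup of PGL₂(ℚ) consisting of the images of the four matrices I, (0 1; 1 0), (a b; −b −a), and (b a; −a −b). -/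
/- For a nonzero `f ∈ ℤ[X]`, the Mahler measure `M(f) = |a_n| ∏ max(|α_i|,1)`. -/
open Polynomial

/-!
A rational Möbius map `(a b; c d)` sends a point `z` of the unit circle to the unit circle iff
`|az + b| = |cz + d|`, i.e. iff `a² + b² - c² - d² + 2 (ab - cd) Re z = 0`. Both coefficients
vanish for each of the four matrices, so every point of the circle has a good orbit; orbits are
finite, hence there are infinitely many good ones. Conversely, infinitely many good orbits give
infinitely many circle points which each `σ ∈ G` maps to the circle or (at most once) to `0`; so
both coefficients vanish and `σ` is represented by `(a b; b a)` or `(a b; -b -a)`. Finite order of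
`(a b; b a)` in `PGL₂(ℚ)` forces `(a + b)ⁿ = (a - b)ⁿ`, so `ab = 0`, leaving `I` and `J`. The
product of two matrices of the second kind is of the first kind, which forces each of them to be
proportional to `(a₀ b₀; -b₀ -a₀)` or to `(b₀ a₀; -a₀ -b₀)` for one fixed such matrix.
-/

open scoped Matrix

lemma mobius_eq_smul (g : GL (Fin 2) ℚ) (x : OnePoint ℂ) :
    mobius g x = g.map (Rat.castHom ℂ) • x := by
  cases x with
  | infty =>
    simp only [OnePoint.smul_infty_eq_ite, Matrix.GeneralLinearGroup.map_apply]
    exact if_congr (by simp) rfl rfl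
  | coe z =>
    simp only [OnePoint.smul_some_eq_ite, Matrix.GeneralLinearGroup.map_apply, eq_ratCast]
    rfl

lemma smul_eq_self_of_mem_center {K : Type*} [Field K] [DecidableEq K] {z : GL (Fin 2) K}
    (hz : z ∈ Subgroup.center (GL (Fin 2) K)) (x : OnePoint K) : z • x = x := by
  rw [Matrix.GeneralLinearGroup.center_eq_range_scalar] at hz
  obtain ⟨u, rfl⟩ := hz
  cases x with
  | infty => simp [OnePoint.smul_infty_eq_ite]
  | coe k => simp [OnePoint.smul_some_eq_ite]

lemma pglApply_mk (g : GL (Fin 2) ℚ) (x : OnePoint ℂ) :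
    pglApply (QuotientGroup.mk g) x = g.map (Rat.castHom ℂ) • x := by
  obtain ⟨z, hz⟩ := QuotientGroup.mk_out_eq_mul (Subgroup.center (GL (Fin 2) ℚ)) g
  rw [pglApply, hz, mobius_eq_smul, map_mul, mul_smul,
    smul_eq_self_of_mem_center (Matrix.GeneralLinearGroup.map_center_le _ z.2)]

lemma pglApply_one (x : OnePoint ℂ) : pglApply 1 x = x := by
  rw [← QuotientGroup.mk_one, pglApply_mk, map_one, one_smul]

lemma pglApply_mul (σ τ : PGL2) (x : OnePoint ℂ) :
    pglApply (σ * τ) x = pglApply σ (pglApply τ x) := by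
  induction σ using QuotientGroup.induction_on with | H g =>
  induction τ using QuotientGroup.induction_on with | H h =>
  rw [← QuotientGroup.mk_mul, pglApply_mk, pglApply_mk, pglApply_mk, map_mul, mul_smul]

lemma pglApply_injective (σ : PGL2) : Function.Injective (pglApply σ) := by
  induction σ using QuotientGroup.induction_on with | H g =>
  simpa only [funext (pglApply_mk g)] using MulAction.injective (g.map (Rat.castHom ℂ))

lemma mk_eq_mk_of_val_eq_smul {g h : GL (Fin 2) ℚ} {r : ℚ}
    (hgh : (g : Matrix (Fin 2) (Fin 2) ℚ) = r • (h : Matrix (Fin 2) (Fin 2) ℚ)) :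
    (QuotientGroup.mk g : PGL2) = QuotientGroup.mk h := by
  rw [eq_comm, QuotientGroup.eq,
    Matrix.GeneralLinearGroup.mem_center_iff_val_mem_range_scalar]
  refine ⟨r, ?_⟩
  rw [Units.val_mul, hgh, Matrix.mul_smul, Units.inv_mul, Matrix.smul_one_eq_diagonal]
  rfl

lemma exists_mk_eq_of_val_eq_smul {g : GL (Fin 2) ℚ} {r : ℚ} {M : Matrix (Fin 2) (Fin 2) ℚ}
    (hg : (g : Matrix (Fin 2) (Fin 2) ℚ) = r • M) :
    ∃ g' : GL (Fin 2) ℚ, (QuotientGroup.mk g' : PGL2) = QuotientGroup.mk g ∧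
      (g' : Matrix (Fin 2) (Fin 2) ℚ) = M := by
  have hM : M.det ≠ 0 := fun h0 => g.det_ne_zero (by rw [hg, Matrix.det_smul, h0, mul_zero])
  exact ⟨.mkOfDetNeZero M hM, (mk_eq_mk_of_val_eq_smul hg).symm, rfl⟩

lemma re_sq_add_im_sq_of_norm_eq_one {z : ℂ} (hz : ‖z‖ = 1) : z.re ^ 2 + z.im ^ 2 = 1 := by
  have h := Complex.sq_norm z
  rw [hz, Complex.normSq_apply] at h
  linarith

lemma norm_mul_add_sq_of_norm_eq_one (a b : ℝ) {z : ℂ} (hz : ‖z‖ = 1) :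
    ‖(a : ℂ) * z + b‖ ^ 2 = a ^ 2 + b ^ 2 + 2 * a * b * z.re := by
  rw [Complex.sq_norm, Complex.normSq_apply]
  simp only [Complex.add_re, Complex.mul_re, Complex.ofReal_re, Complex.ofReal_im,
    Complex.add_im, Complex.mul_im]
  linear_combination a ^ 2 * re_sq_add_im_sq_of_norm_eq_one hz

lemma finite_setOf_norm_eq_one_re_eq (x : ℝ) : {z : ℂ | ‖z‖ = 1 ∧ z.re = x}.Finite := by
  refine (Set.toFinite {(⟨x, √(1 - x ^ 2)⟩ : ℂ), ⟨x, -√(1 - x ^ 2)⟩}).subset ?_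
  rintro z ⟨hz, rfl⟩
  have him : z.im ^ 2 = 1 - z.re ^ 2 := by linarith [re_sq_add_im_sq_of_norm_eq_one hz]
  have him' : z.im ^ 2 = √(1 - z.re ^ 2) ^ 2 := by
    rw [Real.sq_sqrt (him ▸ sq_nonneg _), him]
  rcases sq_eq_sq_iff_eq_or_eq_neg.mp him' with h | h
  · exact Or.inl (Complex.ext rfl h)
  · exact Or.inr (Complex.ext rfl h)

lemma infinite_setOf_norm_eq_one : {z : ℂ | ‖z‖ = 1}.Infinite := by
  refine Set.Infinite.of_image Complex.re ((Set.Icc_infinite (by norm_num : (-1 : ℝ) < 1)).mono ?_)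
  rintro x ⟨hx₁, hx₂⟩
  refine ⟨⟨x, √(1 - x ^ 2)⟩, ?_, rfl⟩
  have h : 0 ≤ 1 - x ^ 2 := by nlinarith
  show ‖_‖ = 1
  rw [Complex.norm_def, Real.sqrt_eq_one, Complex.normSq_apply, Real.mul_self_sqrt h]
  ring

lemma eq_zero_of_forall_add_mul_re_eq_zero {S : Set ℂ} (hS : S.Infinite)
    (hS1 : ∀ z ∈ S, ‖z‖ = 1) {α β : ℝ} (h : ∀ z ∈ S, α + β * z.re = 0) : α = 0 ∧ β = 0 := by
  have hβ : β = 0 := by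
    by_contra hβ
    refine hS ((finite_setOf_norm_eq_one_re_eq (-α / β)).subset fun z hz => ⟨hS1 z hz, ?_⟩)
    field_simp
    linarith [h z hz]
  obtain ⟨z, hz⟩ := hS.nonempty
  exact ⟨by simpa [hβ] using h z hz, hβ⟩

lemma exists_norm_eq_one_smul_eq_iff (g : GL (Fin 2) ℂ) {z : ℂ} (hz : ‖z‖ = 1) :
    (∃ w : ℂ, ‖w‖ = 1 ∧ g • (z : OnePoint ℂ) = w) ↔
      ‖g 0 0 * z + g 0 1‖ = ‖g 1 0 * z + g 1 1‖ := by
  rw [OnePoint.smul_some_eq_ite]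
  constructor
  · rintro ⟨w, hw, hgw⟩
    split_ifs at hgw with hden
    · exact absurd hgw (OnePoint.infty_ne_coe _)
    · rwa [← OnePoint.coe_injective hgw, norm_div,
        div_eq_one_iff_eq (norm_ne_zero_iff.mpr hden)] at hw
  · intro h
    -- a common zero of both rows at `(z, 1)` would make `g` singular
    have hden : g 1 0 * z + g 1 1 ≠ 0 := by
      intro hden
      rw [hden, norm_zero, norm_eq_zero] at h
      have hz0 : z ≠ 0 := by rintro rfl; simp at hz
      apply g.det_ne_zero
      rw [Matrix.det_fin_two]
      apply mul_left_cancel₀ hz0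
      linear_combination g 1 1 * h - g 0 1 * hden
    exact ⟨_, by rw [norm_div, h, div_self (norm_ne_zero_iff.mpr hden)], if_neg hden⟩

lemma exists_norm_eq_one_pglApply_mk_iff (g : GL (Fin 2) ℚ) {z : ℂ} (hz : ‖z‖ = 1) :
    (∃ w : ℂ, ‖w‖ = 1 ∧ pglApply (QuotientGroup.mk g) z = w) ↔
      ((g 0 0 ^ 2 + g 0 1 ^ 2 - g 1 0 ^ 2 - g 1 1 ^ 2 : ℚ) : ℝ) +
        2 * ((g 0 0 * g 0 1 - g 1 0 * g 1 1 : ℚ) : ℝ) * z.re = 0 := by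
  rw [pglApply_mk, exists_norm_eq_one_smul_eq_iff _ hz]
  simp only [Matrix.GeneralLinearGroup.map_apply, Rat.coe_castHom, ← Complex.ofReal_ratCast]
  rw [← sq_eq_sq₀ (norm_nonneg _) (norm_nonneg _), norm_mul_add_sq_of_norm_eq_one _ _ hz,
    norm_mul_add_sq_of_norm_eq_one _ _ hz]
  push_cast
  constructor <;> intro h <;> linarith

lemma eq_swap_or_eq_neg_swap {K : Type*} [Field K] [LinearOrder K] [IsStrictOrderedRing K]
    {a b c d : K} (hsq : a ^ 2 + b ^ 2 = c ^ 2 + d ^ 2) (hmul : a * b = c * d)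
    (hdet : a * d - b * c ≠ 0) : (c = b ∧ d = a) ∨ (c = -b ∧ d = -a) := by
  have hplus : (c + d) ^ 2 = (a + b) ^ 2 := by linear_combination -hsq - 2 * hmul
  have hminus : (c - d) ^ 2 = (a - b) ^ 2 := by linear_combination -hsq + 2 * hmul
  rcases sq_eq_sq_iff_eq_or_eq_neg.mp hplus with hp | hp <;>
    rcases sq_eq_sq_iff_eq_or_eq_neg.mp hminus with hm | hm
  · exact absurd (by rw [show c = a by linarith, show d = b by linarith]; ring) hdet
  · exact Or.inl ⟨by linarith, by linarith⟩
  · exact Or.inr ⟨by linarith, by linarith⟩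
  · exact absurd (by rw [show c = -a by linarith, show d = -b by linarith]; ring) hdet

lemma mul_eq_zero_of_add_pow_eq_sub_pow {R : Type*} [CommRing R] [LinearOrder R]
    [IsStrictOrderedRing R] {a b : R} {n : ℕ} (hn : n ≠ 0) (h : (a + b) ^ n = (a - b) ^ n) :
    a * b = 0 := by
  rcases (pow_eq_pow_iff_of_ne_zero hn).mp h with h | ⟨h, -⟩
  · rw [show b = 0 by linarith, mul_zero]
  · rw [show a = 0 by linarith, zero_mul]

lemma pow_mulVec_eq_pow_smul {R n : Type*} [CommRing R] [Fintype n] [DecidableEq n]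
    {M : Matrix n n R} {v : n → R} {μ : R} (h : M *ᵥ v = μ • v) (k : ℕ) :
    (M ^ k) *ᵥ v = μ ^ k • v := by
  induction k with
  | zero => simp
  | succ k ih => rw [pow_succ, ← Matrix.mulVec_mulVec, h, Matrix.mulVec_smul, ih, smul_smul,
      pow_succ']

lemma mul_eq_zero_of_isOfFinOrder_mk {g : GL (Fin 2) ℚ} {a b : ℚ}
    (hg : (g : Matrix (Fin 2) (Fin 2) ℚ) = !![a, b; b, a])
    (hfin : IsOfFinOrder (QuotientGroup.mk g : PGL2)) : a * b = 0 := by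
  obtain ⟨n, hn, hpow⟩ := hfin.exists_pow_eq_one
  rw [← QuotientGroup.mk_pow, QuotientGroup.eq_one_iff,
    Matrix.GeneralLinearGroup.mem_center_iff_val_mem_range_scalar] at hpow
  obtain ⟨r, hr⟩ := hpow
  rw [Units.val_pow_eq_pow_val, hg] at hr
  have eigen : ∀ s : ℚ, s ^ 2 = 1 → (a + s * b) ^ n = r := fun s hs => by
    have hv : !![a, b; b, a] *ᵥ ![1, s] = (a + s * b) • ![1, s] := by
      ext i
      fin_cases i
      · simp
      · simp
        linear_combination -b * hs
    have := congr_fun (pow_mulVec_eq_pow_smul hv n) 0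
    simpa [← hr] using this.symm
  have hplus := eigen 1 (by norm_num)
  have hminus := eigen (-1) (by norm_num)
  rw [one_mul] at hplus
  rw [neg_one_mul, ← sub_eq_add_neg] at hminus
  exact mul_eq_zero_of_add_pow_eq_sub_pow hn.ne' (hplus.trans hminus.symm)

lemma exists_eq_mul_of_mul_sub_mul_eq_zero {K : Type*} [Field K] {u v x y : K}
    (huv : u ≠ 0 ∨ v ≠ 0) (h : x * v - u * y = 0) : ∃ l : K, x = l * u ∧ y = l * v := by
  rcases huv with hu | hv
  · exact ⟨x / u, by field_simp, by field_simp; linear_combination -h⟩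
  · exact ⟨y / v, by field_simp; linear_combination h, by field_simp⟩

lemma exists_mk_eq_of_maps_circle {σ : PGL2} (hσ : IsOfFinOrder σ) {S : Set ℂ}
    (hS : S.Infinite) (hS1 : ∀ z ∈ S, ‖z‖ = 1)
    (hσS : ∀ z ∈ S, ∃ w : ℂ, ‖w‖ = 1 ∧ pglApply σ z = w) :
    ∃ g : GL (Fin 2) ℚ, (QuotientGroup.mk g : PGL2) = σ ∧
      ((g : Matrix (Fin 2) (Fin 2) ℚ) = 1 ∨ (g : Matrix (Fin 2) (Fin 2) ℚ) = !![0, 1; 1, 0] ∨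
        ∃ a b : ℚ, (g : Matrix (Fin 2) (Fin 2) ℚ) = !![a, b; -b, -a]) := by
  obtain ⟨g, rfl⟩ := QuotientGroup.mk_surjective σ
  obtain ⟨hsq, hmul⟩ := eq_zero_of_forall_add_mul_re_eq_zero hS hS1 fun z hz =>
    (exists_norm_eq_one_pglApply_mk_iff g (hS1 z hz)).mp (hσS z hz)
  have hdet := g.det_ne_zero
  rw [Matrix.det_fin_two] at hdet
  rw [Rat.cast_eq_zero] at hsq
  rw [mul_eq_zero, Rat.cast_eq_zero, or_iff_right two_ne_zero] at hmul
  rcases eq_swap_or_eq_neg_swap (by linear_combination hsq) (by linear_combination hmul) hdet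
    with ⟨hc, hd⟩ | ⟨hc, hd⟩
  · have hsymm : (g : Matrix (Fin 2) (Fin 2) ℚ) = !![g 0 0, g 0 1; g 0 1, g 0 0] :=
      (Matrix.eta_fin_two _).trans (by rw [hc, hd])
    rcases mul_eq_zero.mp (mul_eq_zero_of_isOfFinOrder_mk hsymm hσ) with h | h
    · obtain ⟨g', hg', hJ⟩ := exists_mk_eq_of_val_eq_smul (r := g 0 1) (M := !![0, 1; 1, 0])
        (by rw [hsymm, h]; ext i j; fin_cases i <;> fin_cases j <;> simp)
      exact ⟨g', hg', Or.inr (Or.inl hJ)⟩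
    · obtain ⟨g', hg', hI⟩ := exists_mk_eq_of_val_eq_smul (r := g 0 0) (M := 1)
        (by rw [hsymm, h]; ext i j; fin_cases i <;> fin_cases j <;> simp)
      exact ⟨g', hg', Or.inl hI⟩
  · refine ⟨g, rfl, Or.inr (Or.inr ⟨g 0 0, g 0 1, ?_⟩)⟩
    exact (Matrix.eta_fin_two _).trans (by rw [hc, hd])

lemma exists_mk_eq_of_isOfFinOrder_mk_mul {g g₀ : GL (Fin 2) ℚ} {a b a₀ b₀ : ℚ}
    (hg : (g : Matrix (Fin 2) (Fin 2) ℚ) = !![a, b; -b, -a])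
    (hg₀ : (g₀ : Matrix (Fin 2) (Fin 2) ℚ) = !![a₀, b₀; -b₀, -a₀])
    (hfin : IsOfFinOrder (QuotientGroup.mk (g * g₀) : PGL2)) :
    ∃ g' : GL (Fin 2) ℚ, (QuotientGroup.mk g' : PGL2) = QuotientGroup.mk g ∧
      ((g' : Matrix (Fin 2) (Fin 2) ℚ) = !![a₀, b₀; -b₀, -a₀] ∨
        (g' : Matrix (Fin 2) (Fin 2) ℚ) = !![b₀, a₀; -a₀, -b₀]) := by
  have hprod : ((g * g₀ : GL (Fin 2) ℚ) : Matrix (Fin 2) (Fin 2) ℚ) =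
      !![a * a₀ - b * b₀, a * b₀ - b * a₀; a * b₀ - b * a₀, a * a₀ - b * b₀] := by
    rw [Units.val_mul, hg, hg₀, Matrix.mul_fin_two]
    ring_nf
  have h₀ : a₀ ≠ 0 ∨ b₀ ≠ 0 := by
    by_contra! h
    apply g₀.det_ne_zero
    simp [hg₀, h.1, h.2]
  rcases mul_eq_zero.mp (mul_eq_zero_of_isOfFinOrder_mk hprod hfin) with h | h
  · obtain ⟨l, ha, hb⟩ := exists_eq_mul_of_mul_sub_mul_eq_zero h₀.symm (x := a) (y := b)
      (by linear_combination h)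
    obtain ⟨g', hg', hB⟩ := exists_mk_eq_of_val_eq_smul (r := l) (M := !![b₀, a₀; -a₀, -b₀])
      (by rw [hg, ha, hb]; ext i j; fin_cases i <;> fin_cases j <;> simp)
    exact ⟨g', hg', Or.inr hB⟩
  · obtain ⟨l, ha, hb⟩ := exists_eq_mul_of_mul_sub_mul_eq_zero h₀ (x := a) (y := b)
      (by linear_combination h)
    obtain ⟨g', hg', hA⟩ := exists_mk_eq_of_val_eq_smul (r := l) (M := !![a₀, b₀; -b₀, -a₀])
      (by rw [hg, ha, hb]; ext i j; fin_cases i <;> fin_cases j <;> simp)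
    exact ⟨g', hg', Or.inl hA⟩

lemma exists_klein_rep_of_forall_rep {G : Subgroup PGL2} (hG : ∀ σ ∈ G, IsOfFinOrder σ)
    (hrep : ∀ σ ∈ G, ∃ g : GL (Fin 2) ℚ, (QuotientGroup.mk g : PGL2) = σ ∧
      ((g : Matrix (Fin 2) (Fin 2) ℚ) = 1 ∨ (g : Matrix (Fin 2) (Fin 2) ℚ) = !![0, 1; 1, 0] ∨
        ∃ a b : ℚ, (g : Matrix (Fin 2) (Fin 2) ℚ) = !![a, b; -b, -a])) :
    ∃ a b : ℚ, a ^ 2 ≠ b ^ 2 ∧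
      ∀ σ ∈ G, ∃ g : GL (Fin 2) ℚ, (QuotientGroup.mk g : PGL2) = σ ∧
        ((g : Matrix (Fin 2) (Fin 2) ℚ) = 1 ∨
         (g : Matrix (Fin 2) (Fin 2) ℚ) = !![0, 1; 1, 0] ∨
         (g : Matrix (Fin 2) (Fin 2) ℚ) = !![a, b; -b, -a] ∨
         (g : Matrix (Fin 2) (Fin 2) ℚ) = !![b, a; -a, -b]) := by
  by_cases hA : ∃ g₀ : GL (Fin 2) ℚ, (QuotientGroup.mk g₀ : PGL2) ∈ G ∧
      ∃ a₀ b₀ : ℚ, (g₀ : Matrix (Fin 2) (Fin 2) ℚ) = !![a₀, b₀; -b₀, -a₀]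
  · obtain ⟨g₀, hg₀G, a₀, b₀, hg₀⟩ := hA
    refine ⟨a₀, b₀, fun h => g₀.det_ne_zero ?_, fun σ hσ => ?_⟩
    · rw [hg₀, Matrix.det_fin_two_of]
      linear_combination -h
    obtain ⟨g, rfl, hI | hJ | ⟨a, b, hg⟩⟩ := hrep σ hσ
    · exact ⟨g, rfl, Or.inl hI⟩
    · exact ⟨g, rfl, Or.inr (Or.inl hJ)⟩
    · obtain ⟨g', hg', hAB⟩ := exists_mk_eq_of_isOfFinOrder_mk_mul hg hg₀
        (hG _ (by rw [QuotientGroup.mk_mul]; exact G.mul_mem hσ hg₀G))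
      exact ⟨g', hg', Or.inr (Or.inr hAB)⟩
  · refine ⟨1, 0, by norm_num, fun σ hσ => ?_⟩
    obtain ⟨g, rfl, hI | hJ | hg⟩ := hrep σ hσ
    · exact ⟨g, rfl, Or.inl hI⟩
    · exact ⟨g, rfl, Or.inr (Or.inl hJ)⟩
    · exact absurd ⟨g, hσ, hg⟩ hA

lemma pglOrbit_finite {G : Subgroup PGL2} (hG : (G : Set PGL2).Finite) (x : OnePoint ℂ) :
    (pglOrbit G x).Finite :=
  hG.image (pglApply · x)

lemma mem_pglOrbit_self (G : Subgroup PGL2) (x : OnePoint ℂ) : x ∈ pglOrbit G x :=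
  ⟨1, G.one_mem, pglApply_one x⟩

lemma pglApply_mem_pglOrbit {G : Subgroup PGL2} {σ : PGL2} (hσ : σ ∈ G) {x y : OnePoint ℂ}
    (hy : y ∈ pglOrbit G x) : pglApply σ y ∈ pglOrbit G x := by
  obtain ⟨τ, hτ, rfl⟩ := hy
  exact ⟨σ * τ, G.mul_mem hσ hτ, pglApply_mul σ τ x⟩

lemma not_finite_goodOrbits_of_maps_circle {G : Subgroup PGL2} (hG : (G : Set PGL2).Finite)
    (hcirc : ∀ σ ∈ G, ∀ z : ℂ, ‖z‖ = 1 → ∃ w : ℂ, ‖w‖ = 1 ∧ pglApply σ z = w) :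
    ¬ (goodOrbits G).Finite := by
  intro hfin
  have hunion : (⋃₀ goodOrbits G).Finite :=
    hfin.sUnion fun O ⟨⟨x, hx⟩, _⟩ => hx ▸ pglOrbit_finite hG x
  refine infinite_setOf_norm_eq_one
    ((hunion.preimage OnePoint.coe_injective.injOn).subset fun z hz => ?_)
  refine ⟨pglOrbit G z, ⟨⟨z, rfl⟩, ?_⟩, mem_pglOrbit_self G z⟩
  rintro _ ⟨σ, hσ, rfl⟩
  obtain ⟨w, hw, hσw⟩ := hcirc σ hσ z hz
  exact Or.inr ⟨w, hσw, hw⟩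

lemma exists_infinite_of_not_finite_goodOrbits {G : Subgroup PGL2}
    (h : ¬ (goodOrbits G).Finite) :
    ∃ T : Set ℂ, T.Infinite ∧ (∀ z ∈ T, ‖z‖ = 1) ∧ ∀ σ ∈ G, ∀ z ∈ T,
      pglApply σ z = ((0 : ℂ) : OnePoint ℂ) ∨ ∃ w : ℂ, pglApply σ z = w ∧ ‖w‖ = 1 := by
  set U := ⋃₀ goodOrbits G
  have hU : ∀ y ∈ U, y = ((0 : ℂ) : OnePoint ℂ) ∨ ∃ w : ℂ, y = w ∧ ‖w‖ = 1 :=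
    fun y ⟨O, hO, hy⟩ => hO.2 y hy
  refine ⟨{z | ‖z‖ = 1 ∧ (z : OnePoint ℂ) ∈ U}, fun hfin => h ?_, fun z hz => hz.1, ?_⟩
  · refine ((((hfin.image ((↑) : ℂ → OnePoint ℂ)).insert ((0 : ℂ) : OnePoint ℂ))).finite_subsets).subset
      fun O hO y hy => ?_
    rcases hU y ⟨O, hO, hy⟩ with rfl | ⟨w, rfl, hw⟩
    · exact Set.mem_insert _ _
    · exact Set.mem_insert_of_mem _ ⟨w, ⟨hw, O, hO, hy⟩, rfl⟩
  · rintro σ hσ z ⟨-, O, hO, hz⟩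
    obtain ⟨x, rfl⟩ := hO.1
    exact hU _ ⟨_, hO, pglApply_mem_pglOrbit hσ hz⟩

/-- **Corollary.** For a finite `G ≤ PGL₂(ℚ)`, the set `𝒪` is infinite if and only if
there are `a, b ∈ ℚ` with `a² ≠ b²` such that `G` is contained in the (subgroup given by
the) images in `PGL₂(ℚ)` of the four matrices `I, (0 1; 1 0), (a b; -b -a), (b a; -a -b)`. -/
theorem goodOrbits_infinite_iff (G : Subgroup PGL2) (hGfin : (G : Set PGL2).Finite) :
    ¬ (goodOrbits G).Finite ↔
      ∃ a b : ℚ, a ^ 2 ≠ b ^ 2 ∧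
        ∀ σ ∈ G, ∃ g : GL (Fin 2) ℚ, (QuotientGroup.mk g : PGL2) = σ ∧
          ((g : Matrix (Fin 2) (Fin 2) ℚ) = 1 ∨
           (g : Matrix (Fin 2) (Fin 2) ℚ) = !![0, 1; 1, 0] ∨
           (g : Matrix (Fin 2) (Fin 2) ℚ) = !![a, b; -b, -a] ∨
           (g : Matrix (Fin 2) (Fin 2) ℚ) = !![b, a; -a, -b]) := by
  have hGord : ∀ σ ∈ G, IsOfFinOrder σ := fun σ hσ =>
    haveI := hGfin.to_subtype
    Submonoid.isOfFinOrder_coe.mpr (isOfFinOrder_of_finite (⟨σ, hσ⟩ : G))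
  constructor
  · intro h
    obtain ⟨T, hT, hT1, hGT⟩ := exists_infinite_of_not_finite_goodOrbits h
    refine exists_klein_rep_of_forall_rep hGord fun σ hσ => ?_
    have hS : (T \ {z | pglApply σ z = ((0 : ℂ) : OnePoint ℂ)}).Infinite :=
      hT.sdiff (Set.Subsingleton.finite fun z₁ h₁ z₂ h₂ =>
        OnePoint.coe_injective (pglApply_injective σ (h₁.trans h₂.symm)))
    refine exists_mk_eq_of_maps_circle (hGord σ hσ) hS (fun z hz => hT1 z hz.1) fun z hz => ?_
    obtain ⟨w, hw, hw1⟩ := (hGT σ hσ z hz.1).resolve_left hz.2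
    exact ⟨w, hw1, hw⟩
  · rintro ⟨a, b, -, hG⟩
    refine not_finite_goodOrbits_of_maps_circle hGfin fun σ hσ z hz => ?_
    obtain ⟨g, rfl, hg⟩ := hG σ hσ
    rw [exists_norm_eq_one_pglApply_mk_iff g hz]
    rcases hg with hg | hg | hg | hg <;> simp [hg, mul_comm]
end

section
/- Let a, b, a', b' ∈ ℚ with a² ≠ b² and a'² ≠ b'². Then the image in PGL₂(ℚ) of the matrix product (a b; −b −a)·(a' b'; −b' −a') has finite order if and only if ab' = ba' or aa' = bb'. -/
theorem QuotientGroup.isOfFinOrder_mk_iff {G : Type*} [Group G] {N : Subgroup G} [N.Normal]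
    {g : G} : IsOfFinOrder (g : G ⧸ N) ↔ ∃ n, 0 < n ∧ g ^ n ∈ N := by
  simp only [isOfFinOrder_iff_pow_eq_one, ← QuotientGroup.mk_pow, QuotientGroup.eq_one_iff]

theorem SemiconjBy.eq_iff_eq_of_commute {M : Type*} [Monoid M] {s x y z : M}
    (h : SemiconjBy s x y) (hs : IsUnit s) (hz : Commute s z) : y = z ↔ x = z := by
  constructor
  · rintro rfl
    exact hs.mul_left_cancel (h.trans hz.eq.symm)
  · rintro rfl
    exact hs.mul_right_cancel (h.symm.trans hz.eq)

theorem exists_pow_eq_pow_iff {R : Type*} [Ring R] [LinearOrder R] [IsStrictOrderedRing R]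
    {a b : R} : (∃ n, 0 < n ∧ a ^ n = b ^ n) ↔ a = b ∨ a = -b := by
  constructor
  · rintro ⟨n, hn, hab⟩
    rcases (pow_eq_pow_iff_of_ne_zero hn.ne').mp hab with h | ⟨h, -⟩
    exacts [.inl h, .inr h]
  · rintro (rfl | rfl)
    exacts [⟨1, one_pos, rfl⟩, ⟨2, two_pos, neg_sq b⟩]

namespace Matrix

variable {R : Type*} [CommRing R]

theorem semiconjBy_hadamard_diagonal (p q : R) :
    SemiconjBy !![1, 1; 1, -1] (diagonal ![p + q, p - q]) !![p, q; q, p] := by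
  ext i j
  fin_cases i <;> fin_cases j <;> simp <;> ring

theorem pow_mem_range_scalar_iff (h2 : IsUnit (2 : R)) (p q : R) (n : ℕ) :
    !![p, q; q, p] ^ n ∈ Set.range (scalar (Fin 2)) ↔ (p + q) ^ n = (p - q) ^ n := by
  have hS : IsUnit !![(1 : R), 1; 1, -1] := by
    rw [isUnit_iff_isUnit_det, det_fin_two_of]
    convert h2.neg using 1
    ring
  have hconj := (semiconjBy_hadamard_diagonal p q).pow_right n
  rw [diagonal_pow] at hconj
  have hscalar (c : R) :
      !![p, q; q, p] ^ n = scalar (Fin 2) c ↔ (p + q) ^ n = c ∧ (p - q) ^ n = c := by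
    rw [hconj.eq_iff_eq_of_commute hS (scalar_commute c (Commute.all c) _).symm, scalar_apply,
      diagonal_eq_diagonal_iff, Fin.forall_fin_two]
    simp
  simp only [Set.mem_range, eq_comm (a := scalar (Fin 2) _), hscalar, exists_eq_left']
  exact eq_comm

end Matrix

theorem isOfFinOrder_mk_mul_iff_general (a b a' b' : ℚ)
    (g : GL (Fin 2) ℚ)
    (hg : (g : Matrix (Fin 2) (Fin 2) ℚ) = !![a, b; -b, -a] * !![a', b'; -b', -a']) :
    IsOfFinOrder (QuotientGroup.mk g : PGL2) ↔ a * b' = b * a' ∨ a * a' = b * b' := by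
  have hg' : (g : Matrix (Fin 2) (Fin 2) ℚ) =
      !![a * a' - b * b', a * b' - b * a'; a * b' - b * a', a * a' - b * b'] := by
    rw [hg]
    ext i j
    fin_cases i <;> fin_cases j <;> simp <;> ring
  have h2 : IsUnit (2 : ℚ) := isUnit_iff_ne_zero.mpr two_ne_zero
  simp only [QuotientGroup.isOfFinOrder_mk_iff,
    Matrix.GeneralLinearGroup.mem_center_iff_val_mem_range_scalar, Units.val_pow_eq_pow_val, hg',
    Matrix.pow_mem_range_scalar_iff h2, exists_pow_eq_pow_iff]
  exact or_congr (by constructor <;> intro <;> linarith) (by constructor <;> intro <;> linarith)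

/-- The image in `PGL₂(ℚ)` of the product `(a b; -b -a)·(a' b'; -b' -a')` has finite order
if and only if `ab' = ba'` or `aa' = bb'`. -/
theorem isOfFinOrder_mk_mul_iff (a b a' b' : ℚ) (h : a ^ 2 ≠ b ^ 2) (h' : a' ^ 2 ≠ b' ^ 2)
    (g : GL (Fin 2) ℚ)
    (hg : (g : Matrix (Fin 2) (Fin 2) ℚ) = !![a, b; -b, -a] * !![a', b'; -b', -a']) :
    IsOfFinOrder (QuotientGroup.mk g : PGL2) ↔ a * b' = b * a' ∨ a * a' = b * b' :=
  isOfFinOrder_mk_mul_iff_general a b a' b' g hg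
end
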